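/- Let h : E^d → ℝ be nonnegative. Then the following are equivalent: (i) (1/γ_n) · max{ h(X_i^dec) : i ≤ n } → 0 almost surely as n → ∞ in the sector S_θ^d; (ii) (1/γ_(n,…,n)) · max{ h(X_i^dec) : i ≤ (n,…,n) } → 0 almost surely as n → ∞ in ℤ_+. -/

import Mathlib

open MeasureTheory ProbabilityTheory Filter Finset
open scoped Topology ENNReal

noncomputable section

/-- The sector `S_θ^d ⊆ ℤ_+^d` (positive integers modelled by `ℕ+`). -/
def sector (d : ℕ) (θ : ℝ) : Set (Fin d → ℕ+) :=
  {i | ∀ l k : Fin d, θ < (i l : ℝ) / (i k : ℝ) ∧ (i l : ℝ) / (i k : ℝ) < 1 / θ}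

/-- The filter of `n → ∞` within the sector: every coordinate tends to infinity
(equivalently `min_j n_j → ∞`) and `n` ranges in the sector. -/
def sectorFilter (d : ℕ) (θ : ℝ) : Filter (Fin d → ℕ+) :=
  atTop ⊓ Filter.principal (sector d θ)

/-- The diagonal multi-index `(m, …, m)`. -/
def diag (d : ℕ) (m : ℕ+) : Fin d → ℕ+ := fun _ => m

open scoped Classical in
/-- Multi-indices `i ≤ n` lying in the sector, with pairwise distinct coordinates. -/
def secIdx (d : ℕ) (θ : ℝ) (n : Fin d → ℕ+) : Finset (Fin d → ℕ+) :=
  (Finset.Icc 1 n).filter fun i => i ∈ sector d θ ∧ Function.Injective i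

open scoped Classical in
/-- Multi-indices `i ≤ n` lying in the sector (coordinates may coincide). -/
def secIdxAll (d : ℕ) (θ : ℝ) (n : Fin d → ℕ+) : Finset (Fin d → ℕ+) :=
  (Finset.Icc 1 n).filter fun i => i ∈ sector d θ

open scoped Classical in
/-- Multi-indices `i ≤ n` with pairwise distinct coordinates. -/
def cubeIdx (d : ℕ) (n : Fin d → ℕ+) : Finset (Fin d → ℕ+) :=
  (Finset.Icc 1 n).filter fun i => Function.Injective i

/-- All multi-indices `i ≤ n`. -/
def cubeIdxAll (d : ℕ) (n : Fin d → ℕ+) : Finset (Fin d → ℕ+) := Finset.Icc 1 n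

open scoped Classical in
/-- The block `{i : θ·m < i_l ≤ m for all l}`, with pairwise distinct coordinates. -/
def blockIdx (d : ℕ) (θ : ℝ) (m : ℕ+) : Finset (Fin d → ℕ+) :=
  (Finset.Icc 1 (diag d m)).filter fun i =>
    (∀ l, θ * (m : ℝ) < (i l : ℝ)) ∧ Function.Injective i

open scoped Classical in
/-- The cube `{i : i_l ≤ (1-θ)·m for all l}`, with pairwise distinct coordinates. -/
def smallCube (d : ℕ) (θ : ℝ) (m : ℕ+) : Finset (Fin d → ℕ+) :=
  (Finset.Icc 1 (diag d m)).filter fun i =>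
    (∀ l, (i l : ℝ) ≤ (1 - θ) * (m : ℝ)) ∧ Function.Injective i

/-- Maximum of `f` over a finite index set (`0` for the empty set; used for nonnegative `f`). -/
def finMax {ι : Type*} (s : Finset ι) (f : ι → ℝ) : ℝ := s.fold max 0 f

lemma finMax_nonneg' {ι : Type*} (s : Finset ι) (f : ι → ℝ) : 0 ≤ finMax s f :=
  (Finset.le_fold_max _).2 (Or.inl le_rfl)

lemma le_finMax' {ι : Type*} {s : Finset ι} {f : ι → ℝ} {i : ι} (hi : i ∈ s) :
    f i ≤ finMax s f :=
  (Finset.le_fold_max _).2 (Or.inr ⟨i, hi, le_rfl⟩)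

lemma finMax_mono' {ι : Type*} {s t : Finset ι} (hst : s ⊆ t) (f : ι → ℝ) :
    finMax s f ≤ finMax t f :=
  (Finset.fold_max_le _).2 ⟨finMax_nonneg' t f, fun x hx => le_finMax' (hst hx)⟩

lemma gamma_pow_le {d : ℕ} (γ : (Fin d → ℕ+) → ℝ) (C : ℝ) (hC : 0 < C)
    (hγdbl : ∀ n, γ (fun j => 2 * n j) ≤ C * γ n) :
    ∀ (K : ℕ) (n : Fin d → ℕ+), γ (fun j => 2 ^ K * n j) ≤ C ^ K * γ n := by
  intro K
  induction K with
  | zero => intro n; simp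
  | succ K ih =>
    intro n
    have h1 : (fun j => 2 ^ (K + 1) * n j) = fun j => 2 ^ K * (2 * n j) := by
      funext j
      rw [pow_succ, mul_assoc, mul_comm (2 : ℕ+) (n j)]
    rw [h1]
    calc γ (fun j => 2 ^ K * (2 * n j)) ≤ C ^ K * γ (fun j => 2 * n j) := ih _
      _ ≤ C ^ K * (C * γ n) :=
        mul_le_mul_of_nonneg_left (hγdbl n) (pow_nonneg hC.le K)
      _ = C ^ (K + 1) * γ n := by ring

/-- **Theorem 2.2.** Decoupled version of Theorem 2.1: for nonnegative `h`, a.s. convergence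
to `0` of `γ_n⁻¹ max_{i ≤ n} h(X_i^dec)` along the sector is equivalent to a.s. convergence
to `0` of `γ_{(n,…,n)}⁻¹ max_{i ≤ (n,…,n)} h(X_i^dec)` along the diagonal. -/
theorem sectorial_max_equiv_diagonal_max_dec
    {E Ω : Type*} [MeasurableSpace E] [MeasurableSpace Ω]
    (μ : Measure Ω) [IsProbabilityMeasure μ]
    (d : ℕ) (hd : 1 ≤ d) (θ : ℝ) (hθ0 : 0 < θ) (hθ1 : θ < 1)
    (Xd : Fin d → ℕ+ → Ω → E) (hXdm : ∀ l i, Measurable (Xd l i))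
    (hXdind : iIndepFun (fun p : Fin d × ℕ+ => Xd p.1 p.2) μ)
    (hXdid : ∀ (l : Fin d) (i : ℕ+) (l' : Fin d) (i' : ℕ+),
      IdentDistrib (Xd l i) (Xd l' i') μ μ)
    (h : (Fin d → E) → ℝ) (hhm : Measurable h)
    (hsym : ∀ (σ : Equiv.Perm (Fin d)) (x : Fin d → E), h (x ∘ σ) = h x)
    (hh0 : ∀ x, 0 ≤ h x)
    (γ : (Fin d → ℕ+) → ℝ) (hγpos : ∀ n, 0 < γ n) (hγmono : Monotone γ)
    (C : ℝ) (hC : 0 < C) (hγdbl : ∀ n, γ (fun j => 2 * n j) ≤ C * γ n)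
    (hγ3 : ∀ l : ℕ, 1 ≤ l →
      (∑' k : ℕ, (2 : ℝ) ^ (d * (l + k)) / (γ (diag d (2 ^ (l + k)))) ^ 2)
        ≤ C * (2 : ℝ) ^ (d * l) / (γ (diag d (2 ^ l))) ^ 2) :
    (∀ᵐ ω ∂μ, Tendsto
        (fun n => finMax (cubeIdxAll d n) (fun i => h fun l => Xd l (i l) ω) / γ n)
        (sectorFilter d θ) (𝓝 0))
      ↔ (∀ᵐ ω ∂μ, Tendsto
        (fun m : ℕ+ =>
          finMax (cubeIdxAll d (diag d m)) (fun i => h fun l => Xd l (i l) ω) / γ (diag d m))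
        atTop (𝓝 0)) := by
  classical
  obtain ⟨K, hK⟩ := pow_unbounded_of_one_lt (R := ℝ) (1 / θ) one_lt_two
  have hne : (Finset.univ : Finset (Fin d)).Nonempty := ⟨⟨0, hd⟩, Finset.mem_univ _⟩
  constructor
  · intro H
    filter_upwards [H] with ω hω
    have hdiag : Tendsto (diag d) atTop (sectorFilter d θ) := by
      rw [sectorFilter]
      refine tendsto_inf.2 ⟨?_, tendsto_principal.2 (Eventually.of_forall fun m => ?_)⟩
      · rw [tendsto_atTop]
        intro b
        refine eventually_atTop.2 ⟨Finset.univ.sup' hne b, fun m hm j => ?_⟩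
        exact le_trans (Finset.le_sup' b (Finset.mem_univ j)) hm
      · simp only [sector, Set.mem_setOf_eq]
        intro l k
        have hm0 : ((m : ℝ)) ≠ 0 := by positivity
        have e : ((diag d m l : ℕ) : ℝ) / ((diag d m k : ℕ) : ℝ) = 1 := div_self hm0
        rw [e]
        exact ⟨hθ1, by rw [lt_div_iff₀ hθ0]; linarith⟩
    exact hω.comp hdiag
  · intro H
    filter_upwards [H] with ω hω
    set fω : (Fin d → ℕ+) → ℝ := fun i => h fun l => Xd l (i l) ω with hfω
    set g : ℕ+ → ℝ := fun m => finMax (cubeIdxAll d (diag d m)) fω / γ (diag d m) with hg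
    have hgnn : ∀ m, 0 ≤ g m := fun m => div_nonneg (finMax_nonneg' _ _) (hγpos _).le
    have hsup : Tendsto (fun n : Fin d → ℕ+ => Finset.univ.sup' hne n)
        (sectorFilter d θ) atTop := by
      refine Tendsto.mono_left ?_ inf_le_left
      rw [tendsto_atTop]
      intro b
      refine eventually_atTop.2 ⟨diag d b, fun n hn => ?_⟩
      exact le_trans (hn ⟨0, hd⟩) (Finset.le_sup' n (Finset.mem_univ _))
    have key : Tendsto (fun n : Fin d → ℕ+ => C ^ K * g (Finset.univ.sup' hne n))
        (sectorFilter d θ) (𝓝 0) := by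
      have := (hω.comp hsup).const_mul (C ^ K)
      simpa [Function.comp] using this
    refine tendsto_of_tendsto_of_tendsto_of_le_of_le' tendsto_const_nhds key ?_ ?_
    · exact Eventually.of_forall fun n => div_nonneg (finMax_nonneg' _ _) (hγpos _).le
    · have hsec : ∀ᶠ n in sectorFilter d θ, n ∈ sector d θ :=
        Eventually.filter_mono inf_le_right (eventually_principal.mpr fun x hx => hx)
      filter_upwards [hsec] with n hn
      set M := Finset.univ.sup' hne n with hM
      set m' := Finset.univ.inf' hne n with hm'
      have hMn : ∀ j, n j ≤ M := fun j => Finset.le_sup' n (Finset.mem_univ j)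
      have hm'n : ∀ j, m' ≤ n j := fun j => Finset.inf'_le n (Finset.mem_univ j)
      obtain ⟨l, -, hl⟩ := Finset.exists_mem_eq_sup' hne n
      obtain ⟨k, -, hk⟩ := Finset.exists_mem_eq_inf' hne n
      have hMm' : M ≤ 2 ^ K * m' := by
        have hkpos : (0 : ℝ) < (n k : ℝ) := by exact_mod_cast (n k).pos
        have h1 : (n l : ℝ) / (n k : ℝ) < 1 / θ := (hn l k).2
        have h2 : (n l : ℝ) < (1 / θ) * (n k : ℝ) := by
          rw [div_lt_iff₀ hkpos] at h1; linarith
        have h3 : (M : ℝ) < 2 ^ K * (m' : ℝ) := by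
          rw [hM, hm', hl, hk]
          calc (n l : ℝ) < (1 / θ) * (n k : ℝ) := h2
            _ ≤ 2 ^ K * (n k : ℝ) := by
                apply mul_le_mul_of_nonneg_right hK.le hkpos.le
        have h4 : (M : ℕ) < ((2 ^ K * m' : ℕ+) : ℕ) := by push_cast; exact_mod_cast h3
        exact_mod_cast h4.le
      have hF : finMax (cubeIdxAll d n) fω ≤ finMax (cubeIdxAll d (diag d M)) fω :=
        finMax_mono' (Finset.Icc_subset_Icc le_rfl fun j => hMn j) fω
      have hγ1 : γ (diag d m') ≤ γ n := hγmono fun j => hm'n j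
      have hγ2 : γ (diag d M) ≤ C ^ K * γ (diag d m') := by
        have hstep := gamma_pow_le γ C hC hγdbl K (diag d m')
        have hmono : γ (diag d M) ≤ γ (fun j => 2 ^ K * diag d m' j) :=
          hγmono fun j => hMm'
        exact hmono.trans hstep
      have hFd0 : 0 ≤ finMax (cubeIdxAll d (diag d M)) fω := finMax_nonneg' _ _
      calc finMax (cubeIdxAll d n) fω / γ n
          ≤ finMax (cubeIdxAll d (diag d M)) fω / γ (diag d m') :=
            div_le_div₀ hFd0 hF (hγpos _) hγ1
        _ ≤ C ^ K * g M := by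
            rw [hg]
            rw [← mul_div_assoc, div_le_div_iff₀ (hγpos _) (hγpos _)]
            nlinarith [mul_le_mul_of_nonneg_left hγ2 hFd0]
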